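/- The class of (D − 1)η_n in the quotient group ℤⁿ / image(D² − 1) has order exactly 2^{n−1}: the element 2^{n−1}·(D − 1)η_n belongs to image(D² − 1), and for every integer m with 0 < m < 2^{n−1}, the element m·(D − 1)η_n does not belong to image(D² − 1). -/

import Mathlib

/-!
`ℤⁿ` is the abelian group of functions `Fin n → ℤ` (coordinates `1,…,n`
corresponding to indices `0,…,n-1`).  `shiftE n` is the shift operator `t`,
`(tη)(i) = η(i+1)` for `i < n` and `(tη)(n) = 0`, and
`DE n = 1 + t + t² + … + t^{n−1}`.
-/

noncomputable section

/-- The shift operator `t` on `ℤⁿ`. -/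
def shiftE (n : ℕ) : Module.End ℤ (Fin n → ℤ) :=
  (AddMonoidHom.mk' (fun (η : Fin n → ℤ) (i : Fin n) => if h : (i : ℕ) + 1 < n then η ⟨(i : ℕ) + 1, h⟩ else 0) (by
    intro a b
    funext i
    by_cases h : (i : ℕ) + 1 < n <;> simp [h])).toIntLinearMap

/-- The operator `D = 1 + t + t² + … + t^{n−1}` on `ℤⁿ`. -/
def DE (n : ℕ) : Module.End ℤ (Fin n → ℤ) := ∑ i ∈ Finset.range n, shiftE n ^ i

/-!
Since `D (1 - t) = 1` and `tⁿ = 0`, we have `(D² - 1)(1 - t) = (D - 1)(2 - t)` and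
`(D - 1) t^{n-1} = D tⁿ = 0`, while `(2 - t) Σ_{i<n-1} 2ⁱ t^{n-2-i} = 2^{n-1} - t^{n-1}`; hence
`2^{n-1} (D - 1) = (D² - 1)(1 - t) Σ_{i<n-1} 2ⁱ t^{n-2-i}`.

Conversely, identify `ℤⁿ` with `ℤ[t]/(tⁿ)` via `η_i ↦ t^{n-i}` and evaluate at `t = 2` modulo `2ⁿ`.
This functional turns `t` into multiplication by `2`, hence `D` into `2ⁿ - 1 ≡ -1`, so it kills the
image of `D² - 1`; it sends `(D - 1) η_n` to `-2`, so `m (D - 1) η_n` in the image forces `2ⁿ ∣ 2m`.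
-/

open Finset

lemma sq_sub_one_mul_one_sub_mul_geom_sum₂ {A : Type*} [Ring A] {d t : A} {n : ℕ}
    (hd : d * (1 - t) = 1) (ht : t ^ (n + 1) = 0) :
    (d ^ 2 - 1) * ((1 - t) * ∑ i ∈ range n, 2 ^ i * t ^ (n - 1 - i)) = (2 : ℤ) ^ n • (d - 1) := by
  have hdt : d * t = d - 1 := by
    rw [mul_sub, mul_one] at hd
    rw [← hd]; abel
  have hfactor : (d ^ 2 - 1) * (1 - t) = (d - 1) * (2 - t) :=
    calc (d ^ 2 - 1) * (1 - t) = d * (d * (1 - t)) - 1 + t := by noncomm_ring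
      _ = (d - 1) * 2 - d * t + t := by rw [hd, hdt]; noncomm_ring
      _ = (d - 1) * (2 - t) := by noncomm_ring
  have hkill : (d - 1) * t ^ n = 0 := by rw [← hdt, mul_assoc, ← pow_succ', ht, mul_zero]
  calc (d ^ 2 - 1) * ((1 - t) * ∑ i ∈ range n, 2 ^ i * t ^ (n - 1 - i))
      = (d - 1) * ((2 - t) * ∑ i ∈ range n, 2 ^ i * t ^ (n - 1 - i)) := by
        rw [← mul_assoc, hfactor, mul_assoc]
    _ = (d - 1) * (2 ^ n - t ^ n) := by rw [(Commute.ofNat_left 2 t).mul_geom_sum₂]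
    _ = (d - 1) * 2 ^ n := by rw [mul_sub, hkill, sub_zero]
    _ = (2 : ℤ) ^ n • (d - 1) := by
      rw [zsmul_eq_mul, Int.cast_pow, Int.cast_ofNat, ((Commute.ofNat_left 2 _).pow_left n).eq]

lemma shiftE_apply (n : ℕ) (η : Fin n → ℤ) (i : Fin n) :
    shiftE n η i = if h : (i : ℕ) + 1 < n then η ⟨i + 1, h⟩ else 0 := rfl

lemma shiftE_pow_apply (n k : ℕ) (η : Fin n → ℤ) (i : Fin n) :
    (shiftE n ^ k) η i = if h : (i : ℕ) + k < n then η ⟨i + k, h⟩ else 0 := by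
  induction k generalizing η with
  | zero => simp
  | succ k ih =>
    rw [pow_succ, Module.End.mul_apply, ih]
    simp only [shiftE_apply, ← add_assoc]
    split_ifs <;> first | rfl | omega

lemma shiftE_pow_self (n : ℕ) : shiftE n ^ n = 0 := by
  ext η i
  simp [shiftE_pow_apply]

lemma DE_mul_one_sub_shiftE (n : ℕ) : DE n * (1 - shiftE n) = 1 := by
  rw [DE, geom_sum_mul_neg, shiftE_pow_self, sub_zero]

def evalTwo (n : ℕ) : (Fin n → ℤ) →ₗ[ℤ] ZMod (2 ^ n) :=
  Fintype.linearCombination ℤ fun i : Fin n => (2 : ZMod (2 ^ n)) ^ (n - 1 - i)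

lemma ZMod.two_pow_self (n : ℕ) : (2 : ZMod (2 ^ n)) ^ n = 0 := by
  exact_mod_cast ZMod.natCast_self (2 ^ n)

lemma evalTwo_shiftE (n : ℕ) (η : Fin n → ℤ) : evalTwo n (shiftE n η) = 2 * evalTwo n η := by
  cases n with
  | zero => simp [evalTwo, Fintype.linearCombination_apply]
  | succ N =>
    simp only [evalTwo, Fintype.linearCombination_apply]
    rw [Fin.sum_univ_castSucc, Fin.sum_univ_succ, mul_add, mul_sum]
    simp only [shiftE_apply, Fin.val_last, lt_irrefl, dite_false, zero_smul, add_zero,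
      Fin.val_castSucc, Fin.val_succ, Fin.val_zero]
    rw [Nat.add_sub_cancel, Nat.sub_zero, mul_smul_comm, ← pow_succ', ZMod.two_pow_self,
      smul_zero, zero_add]
    refine sum_congr rfl fun j _ => ?_
    rw [dif_pos (by omega), mul_smul_comm, ← pow_succ', Nat.sub_add_eq,
      Nat.sub_add_cancel (by omega)]
    rfl

lemma evalTwo_shiftE_pow (n k : ℕ) (η : Fin n → ℤ) :
    evalTwo n ((shiftE n ^ k) η) = 2 ^ k * evalTwo n η := by
  induction k with
  | zero => simp
  | succ k ih => rw [pow_succ', Module.End.mul_apply, evalTwo_shiftE, ih, pow_succ', mul_assoc]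

lemma evalTwo_DE (n : ℕ) (η : Fin n → ℤ) : evalTwo n (DE n η) = -evalTwo n η := by
  have hgeom : ∑ k ∈ range n, (2 : ZMod (2 ^ n)) ^ k = -1 := by
    have h := geom_sum_mul (2 : ZMod (2 ^ n)) n
    rwa [ZMod.two_pow_self, zero_sub, show (2 : ZMod (2 ^ n)) - 1 = 1 by norm_num, mul_one] at h
  rw [DE, LinearMap.sum_apply, map_sum]
  simp_rw [evalTwo_shiftE_pow, ← sum_mul, hgeom, neg_one_mul]

lemma range_DE_sq_sub_one_le_ker_evalTwo (n : ℕ) :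
    LinearMap.range (DE n ^ 2 - 1) ≤ LinearMap.ker (evalTwo n) := by
  rw [LinearMap.range_le_ker_iff]
  ext η
  simp [sq, evalTwo_DE]

lemma evalTwo_DE_sub_one_single_last (n : ℕ) (hn : 0 < n) :
    evalTwo n ((DE n - 1) (Pi.single ⟨n - 1, by omega⟩ 1)) = -2 := by
  rw [LinearMap.sub_apply, map_sub, evalTwo_DE, Module.End.one_apply]
  norm_num [evalTwo]

lemma two_pow_pred_smul_DE_sub_one_mem_range (n : ℕ) (hn : 0 < n) (η : Fin n → ℤ) :
    (2 : ℤ) ^ (n - 1) • (DE n - 1) η ∈ LinearMap.range (DE n ^ 2 - 1) := by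
  obtain ⟨N, rfl⟩ : ∃ N, n = N + 1 := ⟨n - 1, by omega⟩
  refine ⟨((1 - shiftE (N + 1)) * ∑ i ∈ range N, 2 ^ i * shiftE (N + 1) ^ (N - 1 - i)) η, ?_⟩
  rw [← Module.End.mul_apply,
    sq_sub_one_mul_one_sub_mul_geom_sum₂ (DE_mul_one_sub_shiftE _) (shiftE_pow_self _)]
  simp only [LinearMap.smul_apply, Nat.add_sub_cancel]

lemma two_pow_pred_dvd_of_smul_DE_sub_one_single_last_mem_range (n : ℕ) (hn : 0 < n) (m : ℤ)
    (hm : m • (DE n - 1) (Pi.single ⟨n - 1, by omega⟩ 1) ∈ LinearMap.range (DE n ^ 2 - 1)) :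
    2 ^ (n - 1) ∣ m := by
  have h := range_DE_sq_sub_one_le_ker_evalTwo n hm
  rw [LinearMap.mem_ker, map_zsmul, evalTwo_DE_sub_one_single_last n hn, zsmul_eq_mul,
    mul_neg, neg_eq_zero, ← Int.cast_ofNat, ← Int.cast_mul,
    ZMod.intCast_zmod_eq_zero_iff_dvd] at h
  obtain ⟨N, rfl⟩ : ∃ N, n = N + 1 := ⟨n - 1, by omega⟩
  rw [Nat.cast_pow, Nat.cast_ofNat, pow_succ] at h
  exact (mul_dvd_mul_iff_right two_ne_zero).mp h

/-- The class of `(D − 1)η_n` in `ℤⁿ / image(D² − 1)` has order exactly `2^{n−1}`: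
`2^{n−1}·(D − 1)η_n ∈ image(D² − 1)`, while `m·(D − 1)η_n ∉ image(D² − 1)` for
`0 < m < 2^{n−1}`. -/
theorem order_of_D_sub_one_etaN (n : ℕ) (hn : 2 ≤ n) :
    ((2 : ℤ) ^ (n - 1)) • (DE n - 1) (Pi.single (⟨n - 1, by omega⟩ : Fin n) (1 : ℤ)) ∈
        LinearMap.range (DE n ^ 2 - 1) ∧
    ∀ m : ℤ, 0 < m → m < 2 ^ (n - 1) →
      m • (DE n - 1) (Pi.single (⟨n - 1, by omega⟩ : Fin n) (1 : ℤ)) ∉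
        LinearMap.range (DE n ^ 2 - 1) := by
  refine ⟨two_pow_pred_smul_DE_sub_one_mem_range n (by omega) _, fun m hm_pos hm_lt hmem => ?_⟩
  have hdvd := two_pow_pred_dvd_of_smul_DE_sub_one_single_last_mem_range n (by omega) m hmem
  exact absurd (Int.le_of_dvd hm_pos hdvd) (by omega)
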